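/- Let P be a program automaton over basic statements Stmt₀ with all states accepting, and let φ be a TSL(T) formula with predicate terms ρ and update terms υ. Let A_{¬φ_LTL} be a Büchi automaton over alphabet 2^{ρ∪υ} accepting exactly the words that satisfy the LTL formula ¬φ_LTL obtained from ¬φ by treating its predicate and update terms as atomic propositions. Then P satisfies φ if and only if the combined product P ⊗ A_{¬φ_LTL} has no feasible trace. -/

import Mathlib

namespace TSLMC

open scoped Classical

/-! ### Theories, function terms, assignments -/

/-- A theory: interpretation of function symbols, plus distinguished values true/false. -/
structure Thy (V F : Type) where
  ε : F → List V → V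
  vtrue : V
  vfalse : V

/-- Function terms over inputs `I`, cells `C` and function symbols `F`. -/
inductive FTerm (I C F : Type) : Type where
  | inp  : I → FTerm I C F
  | cell : C → FTerm I C F
  | app  : F → List (FTerm I C F) → FTerm I C F

/-- An assignment gives values to inputs and cells. -/
abbrev Assign (V I C : Type) := I ⊕ C → V

variable {V I C F Pi : Type}

/-- Evaluation of a function term under an assignment. -/
def FTerm.eval (T : Thy V F) (a : Assign V I C) : FTerm I C F → V
  | .inp i => a (.inl i)
  | .cell c => a (.inr c)
  | .app f ts => T.ε f (ts.attach.map fun t => t.1.eval T a)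
decreasing_by
  have := List.sizeOf_lt_of_mem t.2
  simp only [FTerm.app.sizeOf_spec]
  omega

/-- A predicate term is a function term evaluating only to true or false. -/
def IsPredTerm (T : Thy V F) (τ : FTerm I C F) : Prop :=
  ∀ a : Assign V I C, τ.eval T a = T.vtrue ∨ τ.eval T a = T.vfalse

/-- The theory contains (at least) equality, negation, conjunction and a true constant,
with their usual interpretations, and true ≠ false. -/
structure Ops (V F : Type) (T : Thy V F) where
  feq : F
  fneg : F
  fand : F
  ftrue : F
  heq : ∀ x y : V, T.ε feq [x, y] = if x = y then T.vtrue else T.vfalse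
  hneg : ∀ x : V, T.ε fneg [x] = if x = T.vtrue then T.vfalse else T.vtrue
  hand : ∀ x y : V, T.ε fand [x, y] = if x = T.vtrue ∧ y = T.vtrue then T.vtrue else T.vfalse
  htrue : T.ε ftrue [] = T.vtrue
  tne : T.vtrue ≠ T.vfalse

/-! ### TSL(T) formulas -/

/-- TSL(T) formulas (atoms: predicate terms and update terms `⟦c ↞ τ⟧`). -/
inductive TSL (I C F : Type) : Type where
  | pred : FTerm I C F → TSL I C F
  | upd  : C → FTerm I C F → TSL I C F
  | not  : TSL I C F → TSL I C F
  | and  : TSL I C F → TSL I C F → TSL I C F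
  | next : TSL I C F → TSL I C F
  | untl : TSL I C F → TSL I C F → TSL I C F

/-- `prevA init ζ t` is `ζ (t-1)`, with the fixed initial assignment at `t = 0`. -/
def prevA (init : Assign V I C) (ζ : ℕ → Assign V I C) : ℕ → Assign V I C
  | 0 => init
  | t + 1 => ζ t

/-- Satisfaction of a TSL(T) formula over a computation at a time point. -/
def TSL.sat (T : Thy V F) (init : Assign V I C) (ζ : ℕ → Assign V I C) :
    TSL I C F → ℕ → Prop
  | .pred τ, t => τ.eval T (ζ t) = T.vtrue
  | .upd c τ, t => τ.eval T (prevA init ζ t) = ζ t (.inr c)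
  | .not φ, t => ¬ φ.sat T init ζ t
  | .and φ ψ, t => φ.sat T init ζ t ∧ ψ.sat T init ζ t
  | .next φ, t => φ.sat T init ζ (t + 1)
  | .untl φ ψ, t => ∃ t', t ≤ t' ∧ ψ.sat T init ζ t' ∧
      ∀ t'', t ≤ t'' → t'' < t' → φ.sat T init ζ t''

/-- The list of predicate terms appearing in a TSL(T) formula. -/
def TSL.predList : TSL I C F → List (FTerm I C F)
  | .pred τ => [τ]
  | .upd _ _ => []
  | .not φ => φ.predList
  | .and φ ψ => φ.predList ++ ψ.predList
  | .next φ => φ.predList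
  | .untl φ ψ => φ.predList ++ ψ.predList

/-- The list of update terms appearing in a TSL(T) formula. -/
def TSL.updList : TSL I C F → List (C × FTerm I C F)
  | .pred _ => []
  | .upd c τ => [(c, τ)]
  | .not φ => φ.updList
  | .and φ ψ => φ.updList ++ ψ.updList
  | .next φ => φ.updList
  | .untl φ ψ => φ.updList ++ ψ.updList

/-! ### LTL -/

/-- LTL formulas over atomic propositions `A`. -/
inductive LTL (A : Type) : Type where
  | atom : A → LTL A
  | not : LTL A → LTL A
  | and : LTL A → LTL A → LTL A
  | next : LTL A → LTL A
  | untl : LTL A → LTL A → LTL A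

/-- Standard LTL satisfaction over words of sets of atomic propositions. -/
def LTL.sat (w : ℕ → Set A) : LTL A → ℕ → Prop
  | .atom a, t => a ∈ w t
  | .not φ, t => ¬ φ.sat w t
  | .and φ ψ, t => φ.sat w t ∧ ψ.sat w t
  | .next φ, t => φ.sat w (t + 1)
  | .untl φ ψ, t => ∃ t', t ≤ t' ∧ ψ.sat w t' ∧ ∀ t'', t ≤ t'' → t'' < t' → φ.sat w t''

/-- Atomic propositions: predicate terms and update terms. -/
abbrev AP (I C F : Type) := FTerm I C F ⊕ (C × FTerm I C F)

/-- The LTL formula obtained from a TSL(T) formula by treating predicate and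
update terms as atomic propositions. -/
def TSL.toLTL : TSL I C F → LTL (AP I C F)
  | .pred τ => .atom (.inl τ)
  | .upd c τ => .atom (.inr (c, τ))
  | .not φ => .not φ.toLTL
  | .and φ ψ => .and φ.toLTL ψ.toLTL
  | .next φ => .next φ.toLTL
  | .untl φ ψ => .untl φ.toLTL ψ.toLTL

/-- `SeqW T init ζ ρ υ t` is the set of predicate terms of `ρ` and update terms of `υ`
that hold at time `t` of the computation `ζ`. -/
def SeqW (T : Thy V F) (init : Assign V I C) (ζ : ℕ → Assign V I C)
    (ρ : Set (FTerm I C F)) (υ : Set (C × FTerm I C F)) : ℕ → Set (AP I C F) :=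
  fun t => {a | Sum.elim
    (fun τ => τ ∈ ρ ∧ TSL.sat T init ζ (.pred τ) t)
    (fun u => u ∈ υ ∧ TSL.sat T init ζ (.upd u.1 u.2) t) a}

/-! ### Program statements, matching, feasibility -/

/-- Basic program statements. -/
inductive Stmt0 (I C F : Type) : Type where
  | assert : FTerm I C F → Stmt0 I C F
  | assign : C → FTerm I C F → Stmt0 I C F
  | havoc : C → Stmt0 I C F

/-- Program statements: nonempty finite sequences of basic statements. -/
abbrev Stmt (I C F : Type) := {l : List (Stmt0 I C F) // l ≠ []}

/-- A computation matches a trace of basic statements at time `t`. -/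
def matchesAt (T : Thy V F) (init : Assign V I C) (ζ : ℕ → Assign V I C)
    (σ : ℕ → Stmt0 I C F) (t : ℕ) : Prop :=
  match σ t with
  | .assert τ => τ.eval T (prevA init ζ t) = T.vtrue ∧
      ∀ c : C, ζ t (.inr c) = prevA init ζ t (.inr c)
  | .assign c τ => ζ t (.inr c) = τ.eval T (prevA init ζ t) ∧
      ∀ c', c' ≠ c → ζ t (.inr c') = prevA init ζ t (.inr c')
  | .havoc c => ∀ c', c' ≠ c → ζ t (.inr c') = prevA init ζ t (.inr c')

/-- A computation matches a trace of basic statements. -/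
def Matches (T : Thy V F) (init : Assign V I C) (ζ : ℕ → Assign V I C)
    (σ : ℕ → Stmt0 I C F) : Prop :=
  ∀ t, matchesAt T init ζ σ t

/-- Position (index of the statement, offset inside it) of the `j`-th basic statement
in the flattening of a trace of composed statements. -/
def fpos (σ : ℕ → Stmt I C F) : ℕ → ℕ × ℕ
  | 0 => (0, 0)
  | j + 1 =>
    let p := fpos σ j
    if p.2 + 1 < ((σ p.1).1).length then (p.1, p.2 + 1) else (p.1 + 1, 0)

/-- The flattening of a trace of composed statements into basic statements. -/
def flatten (σ : ℕ → Stmt I C F) (j : ℕ) : Stmt0 I C F :=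
  ((σ (fpos σ j).1).1).getD (fpos σ j).2 (((σ (fpos σ j).1).1).head (σ (fpos σ j).1).2)

/-- A computation matches a trace of composed statements (via its flattening). -/
def MatchesC (T : Thy V F) (init : Assign V I C) (ζ : ℕ → Assign V I C)
    (σ : ℕ → Stmt I C F) : Prop :=
  Matches T init ζ (flatten σ)

/-- A trace of composed statements is feasible if some computation matches it. -/
def Feasible (T : Thy V F) (init : Assign V I C) (σ : ℕ → Stmt I C F) : Prop :=
  ∃ ζ, MatchesC T init ζ σ

/-- A trace of basic statements is feasible if some computation matches it. -/
def Feasible0 (T : Thy V F) (init : Assign V I C) (σ : ℕ → Stmt0 I C F) : Prop :=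
  ∃ ζ, Matches T init ζ σ

/-! ### Büchi automata -/

/-- A Büchi automaton. -/
structure Buchi (A : Type) (Q : Type) where
  q0 : Q
  δ : Q → A → Q → Prop
  Acc : Set Q

/-- A run of a Büchi automaton on a word. -/
def Buchi.IsRun {A Q : Type} (B : Buchi A Q) (σ : ℕ → A) (r : ℕ → Q) : Prop :=
  r 0 = B.q0 ∧ ∀ t, B.δ (r t) (σ t) (r (t + 1))

/-- Büchi acceptance: some run visits accepting states infinitely often. -/
def Buchi.Accepts {A Q : Type} (B : Buchi A Q) (σ : ℕ → A) : Prop :=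
  ∃ r, B.IsRun σ r ∧ ∀ n, ∃ m, n ≤ m ∧ r m ∈ B.Acc

/-- A program automaton over basic statements satisfies a TSL(T) formula if every
computation matching an accepted trace satisfies the formula. -/
def SatisfiesTSL {Qp : Type} (T : Thy V F) (init : Assign V I C)
    (P : Buchi (Stmt0 I C F) Qp) (φ : TSL I C F) : Prop :=
  ∀ σ, P.Accepts σ → ∀ ζ, Matches T init ζ σ → φ.sat T init ζ 0

/-! ### The combine construction and the Büchi program product -/

/-- Extended cell set: original cells, inputs-as-cells, and fresh `tmp` cells. -/
abbrev CStar (I C : Type) := (C ⊕ I) ⊕ ℕ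

/-- Embedding of terms over inputs/cells into terms over the extended cell set. -/
def FTerm.embed : FTerm I C F → FTerm Empty (CStar I C) F
  | .inp i => .cell (.inl (.inr i))
  | .cell c => .cell (.inl (.inl c))
  | .app f ts => .app f (ts.attach.map fun t => t.1.embed)
decreasing_by
  have := List.sizeOf_lt_of_mem t.2
  simp only [FTerm.app.sizeOf_spec]
  omega

/-- Embedding of basic statements into statements over the extended cell set. -/
def Stmt0.embed : Stmt0 I C F → Stmt0 Empty (CStar I C) F
  | .assert τ => .assert τ.embed
  | .assign c τ => .assign (.inl (.inl c)) τ.embed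
  | .havoc c => .havoc (.inl (.inl c))

/-- Conjunction of a list of terms (via the theory's conjunction symbol). -/
def conjTerm (T : Thy V F) (O : Ops V F T) :
    List (FTerm Empty (CStar I C) F) → FTerm Empty (CStar I C) F
  | [] => .app O.ftrue []
  | τ :: ts => .app O.fand [τ, conjTerm T O ts]

/-- The `combine` construction: `save_values; s; new_inputs; check_preds_l; check_updates_l`. -/
noncomputable def combine (T : Thy V F) (O : Ops V F T) (ρ : List (FTerm I C F))
    (υ : List (C × FTerm I C F)) (inps : List I)
    (s : List (Stmt0 I C F)) (l : Set (AP I C F)) : Stmt Empty (CStar I C) F :=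
  ⟨(υ.mapIdx fun j u => Stmt0.assign (Sum.inr j) u.2.embed)
    ++ s.map Stmt0.embed
    ++ (inps.map fun i => Stmt0.havoc (Sum.inl (Sum.inr i)))
    ++ [Stmt0.assert (conjTerm T O
          (ρ.map fun τ => if Sum.inl τ ∈ l then τ.embed else .app O.fneg [τ.embed])),
        Stmt0.assert (conjTerm T O
          (υ.mapIdx fun j u =>
            let eqt : FTerm Empty (CStar I C) F :=
              .app O.feq [.cell (Sum.inl (Sum.inl u.1)), .cell (Sum.inr j)]
            if Sum.inr u ∈ l then eqt else .app O.fneg [eqt]))],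
    by simp⟩

/-- Lifting an automaton over basic statements to an automaton over (composed) statements. -/
def liftB {Qp : Type} (P : Buchi (Stmt0 I C F) Qp) : Buchi (Stmt I C F) Qp where
  q0 := P.q0
  δ := fun q w q' => ∃ s, P.δ q s q' ∧ w = ⟨[s], by simp⟩
  Acc := P.Acc

/-- The combined product `P ⊗ A` of a program automaton and a Büchi automaton over
sets of predicate/update terms. -/
noncomputable def product {Qp Qa : Type} (T : Thy V F) (O : Ops V F T)
    (P : Buchi (Stmt I C F) Qp) (A : Buchi (Set (AP I C F)) Qa)
    (ρ : List (FTerm I C F)) (υ : List (C × FTerm I C F)) (inps : List I) :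
    Buchi (Stmt Empty (CStar I C) F) (Qp × Qa) where
  q0 := (P.q0, A.q0)
  δ := fun x w y => ∃ s l, P.δ x.1 s y.1 ∧ A.δ x.2 l y.2 ∧ w = combine T O ρ υ inps s.1 l
  Acc := {x | x.2 ∈ A.Acc}

/-! ### HyperTSL(T) -/

/-- HyperTSL(T) formulas: a quantifier prefix over trace variables, followed by a
quantifier-free formula over trace-indexed inputs and cells. -/
inductive HyperTSL (I C F Pi : Type) : Type where
  | qf : TSL (I × Pi) (C × Pi) F → HyperTSL I C F Pi
  | all : Pi → HyperTSL I C F Pi → HyperTSL I C F Pi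
  | ex : Pi → HyperTSL I C F Pi → HyperTSL I C F Pi

/-- Extension `ζ̂[π, ζ]` of a hyper-computation by a computation for trace variable `π`. -/
noncomputable def extendH (ζh : ℕ → Assign V (I × Pi) (C × Pi)) (π : Pi)
    (ζ : ℕ → Assign V I C) : ℕ → Assign V (I × Pi) (C × Pi) :=
  fun t x =>
    match x with
    | .inl (i, π') => if π' = π then ζ t (.inl i) else ζh t (.inl (i, π'))
    | .inr (c, π') => if π' = π then ζ t (.inr c) else ζh t (.inr (c, π'))

/-- Satisfaction of a HyperTSL(T) formula. -/
noncomputable def HyperTSL.sat (T : Thy V F) (init : Assign V (I × Pi) (C × Pi))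
    (Z : Set (ℕ → Assign V I C)) :
    HyperTSL I C F Pi → (ℕ → Assign V (I × Pi) (C × Pi)) → ℕ → Prop
  | .qf ψ, ζh, t => ψ.sat T init ζh t
  | .all π φ, ζh, t => ∀ ζ ∈ Z, φ.sat T init Z (extendH ζh π ζ) t
  | .ex π φ, ζh, t => ∃ ζ ∈ Z, φ.sat T init Z (extendH ζh π ζ) t

/-- Lift an assignment to a hyper-assignment (every trace gets the same values). -/
def liftInit (init : Assign V I C) : Assign V (I × Pi) (C × Pi) :=
  fun x => match x with
  | .inl (i, _) => init (.inl i)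
  | .inr (c, _) => init (.inr c)

/-- The set of computations matching accepted traces of a program automaton. -/
def Zof {Qp : Type} (T : Thy V F) (init : Assign V I C)
    (P : Buchi (Stmt0 I C F) Qp) : Set (ℕ → Assign V I C) :=
  {ζ | ∃ σ, P.Accepts σ ∧ Matches T init ζ σ}

/-- A program automaton satisfies a HyperTSL(T) formula. -/
noncomputable def SatisfiesHyper {Qp : Type} (T : Thy V F) (init : Assign V I C)
    (P : Buchi (Stmt0 I C F) Qp) (φ : HyperTSL I C F Pi) : Prop :=
  φ.sat T (liftInit init) (Zof T init P) (fun _ => liftInit init) 0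

/-- Renaming of terms: cell `c` becomes `c_π`, input `i` becomes `i_π`. -/
def FTerm.rename (π : Pi) : FTerm I C F → FTerm (I × Pi) (C × Pi) F
  | .inp i => .inp (i, π)
  | .cell c => .cell (c, π)
  | .app f ts => .app f (ts.attach.map fun t => t.1.rename π)
decreasing_by
  have := List.sizeOf_lt_of_mem t.2
  simp only [FTerm.app.sizeOf_spec]
  omega

/-- Renaming of basic statements to a trace variable. -/
def Stmt0.rename (π : Pi) : Stmt0 I C F → Stmt0 (I × Pi) (C × Pi) F
  | .assert τ => .assert (τ.rename π)
  | .assign c τ => .assign (c, π) (τ.rename π)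
  | .havoc c => .havoc (c, π)

/-- The `n`-fold self-composition of a program automaton. -/
def selfComp {Qp : Type} (P : Buchi (Stmt0 I C F) Qp) (n : ℕ) :
    Buchi (Stmt (I × Fin n) (C × Fin n) F) (Fin n → Qp) where
  q0 := fun _ => P.q0
  δ := fun q w q' => ∃ ss : Fin n → Stmt0 I C F,
        (∀ j, P.δ (q j) (ss j) (q' j)) ∧
        w.1 = (List.finRange n).map fun j => (ss j).rename j
  Acc := Set.univ

/-- The `m`-fold self-composition, using the first `m` of `n` trace variables. -/
def selfCompInto {Qp : Type} (P : Buchi (Stmt0 I C F) Qp) (m n : ℕ) (h : m ≤ n) :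
    Buchi (Stmt (I × Fin n) (C × Fin n) F) (Fin m → Qp) where
  q0 := fun _ => P.q0
  δ := fun q w q' => ∃ ss : Fin m → Stmt0 I C F,
        (∀ j, P.δ (q j) (ss j) (q' j)) ∧
        w.1 = (List.finRange m).map fun j => (ss j).rename (Fin.castLE h j)
  Acc := Set.univ

end TSLMC

/-! ### k-feasibility and the automaton `P_k` -/

namespace TSLMC
open scoped Classical
variable {V I C F Pi : Type}

/-- The statement `assert(true)`. -/
def trueStmt (T : Thy V F) (O : Ops V F T) : Stmt I C F :=
  ⟨[.assert (.app O.ftrue [])], by simp⟩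

/-- Extend a finite window of statements by `assert(true)^ω`. -/
def extendTrue (T : Thy V F) (O : Ops V F T) (ss : List (Stmt I C F)) : ℕ → Stmt I C F :=
  fun t => if h : t < ss.length then ss.get ⟨t, h⟩ else trueStmt T O

/-- A finite window of statements is feasible if, followed by `assert(true)^ω`, it is
feasible for some initial assignment. -/
def WinFeasible (T : Thy V F) (O : Ops V F T) (ss : List (Stmt I C F)) : Prop :=
  ∃ init : Assign V I C, Feasible T init (extendTrue T O ss)

/-- The window `σ_j … σ_{j+k-1}` of a trace. -/
def window (σ : ℕ → α) (j k : ℕ) : List α :=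
  (List.range k).map fun i => σ (j + i)

/-- A trace is `k`-feasible if no window of `k` consecutive statements is infeasible
for all initial assignments. -/
def KFeasible (T : Thy V F) (O : Ops V F T) (k : ℕ) (σ : ℕ → Stmt I C F) : Prop :=
  ∀ j, WinFeasible T O (window σ j k)

/-- Chains of transitions of an automaton. -/
def chain {S Qp : Type} (P : Buchi S Qp) : Qp → List (S × Qp) → Prop
  | _, [] => True
  | q, (s, q') :: rest => P.δ q s q' ∧ chain P q' rest

/-- The last state of an alternating state/statement sequence. -/
def lastQ {S Qp : Type} (st : Qp × List (S × Qp)) : Qp :=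
  (st.2.getLast?).elim st.1 Prod.snd

/-- The statements of an alternating state/statement sequence. -/
def stmts {S Qp : Type} (st : Qp × List (S × Qp)) : List S :=
  st.2.map Prod.fst

/-- Valid states of `P_k`: chains of transitions of `P` of length `k-1`, or shorter
ones starting at the initial state. -/
def ValidSt {S Qp : Type} (P : Buchi S Qp) (k : ℕ) (st : Qp × List (S × Qp)) : Prop :=
  chain P st.1 st.2 ∧ (st.2.length = k - 1 ∨ (st.2.length < k - 1 ∧ st.1 = P.q0))

/-- Extend an alternating sequence by a transition, dropping the first entry if the
window is full. -/
def push {S Qp : Type} (k : ℕ) (st : Qp × List (S × Qp)) (s : S) (q' : Qp) :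
    Qp × List (S × Qp) :=
  let l' := st.2 ++ [(s, q')]
  if k ≤ l'.length then
    match l' with
    | [] => (st.1, [])
    | e :: rest => (e.2, rest)
  else (st.1, l')

/-- The automaton `P_k`: `P` without `k`-infeasibility. -/
def Pk {Qp : Type} (T : Thy V F) (O : Ops V F T) (P : Buchi (Stmt I C F) Qp) (k : ℕ) :
    Buchi (Stmt I C F) (Qp × List (Stmt I C F × Qp)) where
  q0 := (P.q0, [])
  δ := fun st s st' => ValidSt P k st ∧ ValidSt P k st' ∧
        ∃ q', P.δ (lastQ st) s q' ∧ WinFeasible T O (stmts st ++ [s]) ∧ st' = push k st s q'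
  Acc := {st | lastQ st ∈ P.Acc}

/-! ### Infeasible accepting cycles and their removal -/

/-- The trace `(s₁ … s_n)^ω` of a cycle. -/
def cycTrace (T : Thy V F) (O : Ops V F T) {Qp : Type}
    (ϱ : List (Qp × Stmt I C F × Qp)) : ℕ → Stmt I C F :=
  fun t => ((ϱ[t % ϱ.length]?).map fun e => e.2.1).getD (trueStmt T O)

/-- `ϱ` is a cycle of transitions of `B`. -/
def IsCycle {S Qp : Type} (B : Buchi S Qp) (ϱ : List (Qp × S × Qp)) : Prop :=
  ϱ ≠ [] ∧ (∀ e ∈ ϱ, B.δ e.1 e.2.1 e.2.2) ∧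
  (∀ i, (h : i + 1 < ϱ.length) →
    (ϱ.get ⟨i + 1, h⟩).1 = (ϱ.get ⟨i, Nat.lt_of_succ_lt h⟩).2.2) ∧
  ∀ h : ϱ ≠ [], (ϱ.getLast h).2.2 = (ϱ.head h).1

/-- An infeasible accepting cycle. -/
def InfAccCycle {Qp : Type} (T : Thy V F) (O : Ops V F T)
    (B : Buchi (Stmt I C F) Qp) (ϱ : List (Qp × Stmt I C F × Qp)) : Prop :=
  IsCycle B ϱ ∧ (∃ e ∈ ϱ, e.1 ∈ B.Acc) ∧
  ∀ init : Assign V I C, ¬ Feasible T init (cycTrace T O ϱ)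

/-- A trace ends with the infinite repetition of the statements of the cycle `ϱ`. -/
def EndsWithCyc {Qp : Type} (T : Thy V F) (O : Ops V F T)
    (σ : ℕ → Stmt I C F) (ϱ : List (Qp × Stmt I C F × Qp)) : Prop :=
  ∃ N, ∀ j, σ (N + j) = cycTrace T O ϱ j

/-- The automaton `A_ϱ`, accepting exactly the traces ending with `ϱ^ω`. -/
def cycAut {Qp : Type} (ϱ : List (Qp × Stmt I C F × Qp)) :
    Buchi (Stmt I C F) (Option (Fin ϱ.length)) where
  q0 := none
  δ := fun st s st' =>
    match st with
    | none => st' = none ∨ ∃ h : ϱ ≠ [],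
        s = (ϱ.head h).2.1 ∧
        st' = some ⟨1 % ϱ.length, Nat.mod_lt _ (List.length_pos_iff.mpr h)⟩
    | some i => s = (ϱ.get i).2.1 ∧
        st' = some ⟨((i : ℕ) + 1) % ϱ.length,
          Nat.mod_lt _ (Nat.lt_of_le_of_lt (Nat.zero_le _) i.isLt)⟩
  Acc := {st | st ≠ none}

/-- A Büchi automaton bundled with its state type. -/
structure BAut (A : Type) : Type 1 where
  Q : Type
  B : Buchi A Q

/-- One removal step: remove (the languages of the automata `A_ϱ` for) a set of
infeasible accepting cycles from an automaton. -/
def RemStep (T : Thy V F) (O : Ops V F T) (x y : BAut (Stmt I C F)) : Prop :=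
  ∃ Cset : Set (List (x.Q × Stmt I C F × x.Q)),
    (∀ ϱ ∈ Cset, InfAccCycle T O x.B ϱ) ∧
    ∀ σ, y.B.Accepts σ ↔ (x.B.Accepts σ ∧ ∀ ϱ ∈ Cset, ¬ EndsWithCyc T O σ ϱ)

/-- `k'` iterations of removing infeasible accepting cycles. -/
def RemChain (T : Thy V F) (O : Ops V F T) :
    ℕ → BAut (Stmt I C F) → BAut (Stmt I C F) → Prop
  | 0, x, y => y = x
  | k' + 1, x, y => ∃ z, RemChain T O k' x z ∧ RemStep T O z y

/-- The universal projection of (a refinement of) the combined product: keep the first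
`m` of the `n` statements of each `combine`-labelled transition. -/
noncomputable def projU {Q' : Type} (T : Thy V F) (O : Ops V F T) {m n : ℕ}
    (_hm : 0 < m) (hmn : m ≤ n)
    (ρ : List (FTerm (I × Fin n) (C × Fin n) F))
    (υ : List ((C × Fin n) × FTerm (I × Fin n) (C × Fin n) F))
    (inps : List (I × Fin n))
    (B : Buchi (Stmt Empty (CStar (I × Fin n) (C × Fin n)) F) Q') :
    Buchi (Stmt (I × Fin n) (C × Fin n) F) Q' where
  q0 := B.q0
  δ := fun q w q' => ∃ (ss : Fin n → Stmt0 (I × Fin n) (C × Fin n) F)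
        (l : Set (AP (I × Fin n) (C × Fin n) F)),
        B.δ q (combine T O ρ υ inps ((List.finRange n).map ss) l) q' ∧
        w.1 = (List.finRange m).map fun j => ss (Fin.castLE hmn j)
  Acc := B.Acc

/-- The formula `∀π₁ … ∀π_m ∃π_{m+1} … ∃π_n. ψ`. -/
def AEform (m n : ℕ) (ψ : TSL (I × Fin n) (C × Fin n) F) : HyperTSL I C F (Fin n) :=
  (List.finRange n).foldr
    (fun (j : Fin n) acc => if (j : ℕ) < m then HyperTSL.all j acc else HyperTSL.ex j acc)
    (.qf ψ)

end TSLMC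
/-! ### Reduced and adapted computations -/

namespace TSLMC
open scoped Classical
variable {V I C F Pi : Type}

/-- The index `ι(t) = B·(t+1) − 3` for blocks of length `B`. -/
def iotaIdx (B t : ℕ) : ℕ := B * (t + 1) - 3

/-- The reduced computation: the combined computation at the indices `ι(t)`,
restricted to the original inputs and cells. -/
def reduceC (B : ℕ) (ζ : ℕ → Assign V Empty (CStar I C)) : ℕ → Assign V I C :=
  fun t x => ζ (iotaIdx B t) (.inr (.inl x.swap))

/-- The reduced computation of trace variable `j`: the combined hyper-computation at
the indices `ι(t)`, restricted to the `j`-indexed inputs and cells, renamed back. -/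
def reduceTr {n : ℕ} (B : ℕ) (j : Fin n)
    (ζ : ℕ → Assign V Empty (CStar (I × Fin n) (C × Fin n))) : ℕ → Assign V I C :=
  fun t x => ζ (iotaIdx B t)
    (.inr (.inl (match x with | .inl i => .inr (i, j) | .inr c => .inl (c, j))))

/-- Assembling a hyper-computation from one computation per trace variable
(`∅[π₁, ζ₁]…[π_n, ζ_n]`). -/
def assembleH {n : ℕ} (red : Fin n → ℕ → Assign V I C) :
    ℕ → Assign V (I × Fin n) (C × Fin n) :=
  fun t x => match x with
  | .inl (i, j) => red j t (.inl i)
  | .inr (c, j) => red j t (.inr c)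

/-- The adapted computation `ζ̃` of a computation `ζ`. -/
noncomputable def adapt (T : Thy V F) (upds : List (C × FTerm I C F)) (inps : List I)
    (init : Assign V I C) (initC : Assign V Empty (CStar I C))
    (ζ : ℕ → Assign V I C) : ℕ → Assign V Empty (CStar I C) := fun idx x =>
  let m := upds.length
  let k := inps.length
  let b := idx / (m + k + 3)
  let i := idx % (m + k + 3)
  let newTmp : ℕ → V := fun p =>
    ((upds[p]?).map fun u => u.2.eval T (prevA init ζ b)).getD (initC (.inr (.inr p)))
  let oldTmp : ℕ → V := fun p =>
    match b with
    | 0 => initC (.inr (.inr p))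
    | b' + 1 => ((upds[p]?).map fun u => u.2.eval T (prevA init ζ b')).getD
        (initC (.inr (.inr p)))
  match x with
  | .inl e => e.elim
  | .inr (.inr p) => if i < m then (if p ≤ i then newTmp p else oldTmp p) else newTmp p
  | .inr (.inl (.inl c)) => if i < m then prevA init ζ b (.inr c) else ζ b (.inr c)
  | .inr (.inl (.inr ii)) =>
      if i < m + 1 then prevA init ζ b (.inl ii)
      else if i ≤ m + k then
        (if inps.idxOf ii < i - m then ζ b (.inl ii) else prevA init ζ b (.inl ii))
      else ζ b (.inl ii)

/-- The adapted hyper-computation of computations `ζ_{π₁}, …, ζ_{π_n}`. -/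
noncomputable def hadapt {n : ℕ} (T : Thy V F)
    (upds : List ((C × Fin n) × FTerm (I × Fin n) (C × Fin n) F))
    (inps : List (I × Fin n)) (init : Assign V I C)
    (initC : Assign V Empty (CStar (I × Fin n) (C × Fin n)))
    (ζs : Fin n → ℕ → Assign V I C) :
    ℕ → Assign V Empty (CStar (I × Fin n) (C × Fin n)) := fun idx x =>
  let m := upds.length
  let k := inps.length
  let b := idx / (m + n + k + 2)
  let i := idx % (m + n + k + 2)
  let ζ' : ℕ → Assign V (I × Fin n) (C × Fin n) := assembleH ζs
  let hinit : Assign V (I × Fin n) (C × Fin n) := liftInit init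
  let newTmp : ℕ → V := fun p =>
    ((upds[p]?).map fun u => u.2.eval T (prevA hinit ζ' b)).getD (initC (.inr (.inr p)))
  let oldTmp : ℕ → V := fun p =>
    match b with
    | 0 => initC (.inr (.inr p))
    | b' + 1 => ((upds[p]?).map fun u => u.2.eval T (prevA hinit ζ' b')).getD
        (initC (.inr (.inr p)))
  match x with
  | .inl e => e.elim
  | .inr (.inr p) => if i < m then (if p ≤ i then newTmp p else oldTmp p) else newTmp p
  | .inr (.inl (.inl cj)) =>
      if i < m then prevA hinit ζ' b (.inr cj)
      else if i < m + n then
        (if (cj.2 : ℕ) < i - m + 1 then ζs cj.2 b (.inr cj.1)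
         else prevA hinit ζ' b (.inr cj))
      else ζ' b (.inr cj)
  | .inr (.inl (.inr ij)) =>
      if i < m + n then prevA hinit ζ' b (.inl ij)
      else if i < m + n + k then
        (if inps.idxOf ij < i - (m + n) + 1 then ζ' b (.inl ij)
         else prevA hinit ζ' b (.inl ij))
      else ζ' b (.inl ij)

/-- The composed trace `σ_t = ((σ_{π₁})_{π₁})_t; … ; ((σ_{π_n})_{π_n})_t`. -/
def composedTrace {n : ℕ} (σs : Fin n → ℕ → Stmt0 I C F) (t : ℕ) :
    List (Stmt0 (I × Fin n) (C × Fin n) F) :=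
  (List.finRange n).map fun j => (σs j t).rename j

/-- The composed trace, as a trace of (nonempty) program statements. -/
def composedStmt {n : ℕ} (hn : 0 < n) (σs : Fin n → ℕ → Stmt0 I C F) (t : ℕ) :
    Stmt (I × Fin n) (C × Fin n) F :=
  ⟨composedTrace σs t, by
    intro h
    have := congrArg List.length h
    simp [composedTrace] at this
    omega⟩

end TSLMC

namespace TSLMC
open scoped Classical

/-!
Every statement `combine s l` of the product has the same length, so a computation matching a
product trace splits into one block per step. Within a block, `save_values` stores the values of
the update terms, `s` acts on the original cells, `new_inputs` refreshes the inputs, and the two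
asserts force `l` to be exactly the set of predicate and update terms that hold at this step
(the update checks compare each cell with its saved value). Restricting the block-end assignments
to the original inputs and cells therefore gives a computation of `P` whose word of atoms is the
accepted word of `A`, i.e. a computation violating `φ`; conversely, a violating computation of `P`
extends to a product computation by storing the update values in the `tmp` cells and labelling
each step with the atoms it satisfies.
-/

variable {V I C F : Type}

theorem FTerm.eval_app (T : Thy V F) (a : Assign V I C) (f : F) (ts : List (FTerm I C F)) :
    (FTerm.app f ts).eval T a = T.ε f (ts.map (·.eval T a)) := by
  rw [FTerm.eval]
  exact congrArg _ List.attach_map_val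

theorem FTerm.embed_app (f : F) (ts : List (FTerm I C F)) :
    (FTerm.app f ts).embed = .app f (ts.map FTerm.embed) := by
  rw [FTerm.embed]
  exact congrArg _ List.attach_map_val

def origOf (a : Assign V Empty (CStar I C)) : Assign V I C :=
  fun x => a (.inr (.inl x.swap))

theorem FTerm.eval_embed (T : Thy V F) (a : Assign V Empty (CStar I C)) :
    (τ : FTerm I C F) → τ.embed.eval T a = τ.eval T (origOf a)
  | .inp _ => by simp [FTerm.embed, FTerm.eval, origOf]
  | .cell _ => by simp [FTerm.embed, FTerm.eval, origOf]
  | .app f ts => by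
    rw [embed_app, eval_app, eval_app, List.map_map]
    exact congrArg _ (List.map_congr_left fun t _ => FTerm.eval_embed T a t)

def Stmt0.Step (T : Thy V F) (a : Assign V I C) : Stmt0 I C F → Assign V I C → Prop
  | .assert τ, b => τ.eval T a = T.vtrue ∧ ∀ c, b (.inr c) = a (.inr c)
  | .assign c τ, b => b (.inr c) = τ.eval T a ∧ ∀ c', c' ≠ c → b (.inr c') = a (.inr c')
  | .havoc c, b => ∀ c', c' ≠ c → b (.inr c') = a (.inr c')

theorem matchesAt_iff_step (T : Thy V F) (init : Assign V I C) (ζ : ℕ → Assign V I C)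
    (σ : ℕ → Stmt0 I C F) (t : ℕ) :
    matchesAt T init ζ σ t ↔ (σ t).Step T (prevA init ζ t) (ζ t) := by
  unfold matchesAt
  cases σ t <;> rfl

inductive Exec (T : Thy V F) : Assign V I C → List (Stmt0 I C F) → Assign V I C → Prop
  | nil (a : Assign V I C) : Exec T a [] a
  | cons {a a' b : Assign V I C} {s : Stmt0 I C F} {l : List (Stmt0 I C F)} :
      s.Step T a a' → Exec T a' l b → Exec T a (s :: l) b

variable {T : Thy V F}

theorem Stmt0.step_congr_cells {a b b' : Assign V I C} (s : Stmt0 I C F)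
    (h : ∀ c, b (.inr c) = b' (.inr c)) : s.Step T a b ↔ s.Step T a b' := by
  cases s <;> simp only [Stmt0.Step, h]

theorem Stmt0.step_assert_iff [IsEmpty I] {a b : Assign V I C} (τ : FTerm I C F) :
    (Stmt0.assert τ).Step T a b ↔ τ.eval T a = T.vtrue ∧ b = a := by
  simp only [Stmt0.Step, funext_iff, Sum.forall, IsEmpty.forall_iff, true_and]

theorem Stmt0.step_assign_iff [IsEmpty I] {a b : Assign V I C} (c : C) (τ : FTerm I C F) :
    (Stmt0.assign c τ).Step T a b ↔ b = Function.update a (.inr c) (τ.eval T a) := by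
  simp only [Stmt0.Step, funext_iff, Sum.forall, IsEmpty.forall_iff, true_and]
  constructor
  · rintro ⟨hc, hne⟩ c'
    by_cases h : c' = c
    · subst h; simp [hc]
    · simp [h, hne c' h]
  · intro h
    exact ⟨by simp [h], fun c' hc' => by simp [h, hc']⟩

theorem Stmt0.step_embed_iff {a b : Assign V Empty (CStar I C)} (s : Stmt0 I C F) :
    s.embed.Step T a b ↔ s.Step T (origOf a) (origOf b) ∧
      (∀ i, b (.inr (.inl (.inr i))) = a (.inr (.inl (.inr i)))) ∧
      ∀ p, b (.inr (.inr p)) = a (.inr (.inr p)) := by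
  cases s <;> simp [Stmt0.embed, Stmt0.Step, FTerm.eval_embed, origOf, Sum.forall, and_assoc]

theorem exec_nil_iff {a b : Assign V I C} : Exec T a [] b ↔ b = a :=
  ⟨fun h => by cases h; rfl, fun h => by subst h; exact .nil _⟩

theorem exec_cons_iff {a b : Assign V I C} {s : Stmt0 I C F} {l : List (Stmt0 I C F)} :
    Exec T a (s :: l) b ↔ ∃ a', s.Step T a a' ∧ Exec T a' l b :=
  ⟨fun h => by cases h with | cons h₁ h₂ => exact ⟨_, h₁, h₂⟩,
    fun ⟨_, h₁, h₂⟩ => .cons h₁ h₂⟩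

theorem exec_singleton_iff {a b : Assign V I C} {s : Stmt0 I C F} :
    Exec T a [s] b ↔ s.Step T a b := by
  simp [exec_cons_iff, exec_nil_iff]

theorem exec_append_iff {a b : Assign V I C} {l₁ l₂ : List (Stmt0 I C F)} :
    Exec T a (l₁ ++ l₂) b ↔ ∃ a', Exec T a l₁ a' ∧ Exec T a' l₂ b := by
  induction l₁ generalizing a with
  | nil => simp [exec_nil_iff]
  | cons s l ih =>
    simp only [List.cons_append, exec_cons_iff, ih]
    exact ⟨fun ⟨a₁, h₁, a₂, h₂, h₃⟩ => ⟨a₂, ⟨a₁, h₁, h₂⟩, h₃⟩,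
      fun ⟨a₂, ⟨a₁, h₁, h₂⟩, h₃⟩ => ⟨a₁, h₁, a₂, h₂, h₃⟩⟩

theorem exec_havoc_iff [IsEmpty I] {a b : Assign V I C} (cs : List C) :
    Exec T a (cs.map .havoc) b ↔ ∀ c ∉ cs, b (.inr c) = a (.inr c) := by
  induction cs generalizing a with
  | nil => simp [exec_nil_iff, funext_iff, Sum.forall]
  | cons c cs ih =>
    simp only [List.map_cons, exec_cons_iff, ih, Stmt0.Step, List.mem_cons, not_or]
    constructor
    · rintro ⟨a', ha', hb⟩ c' ⟨hne, hnot⟩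
      rw [hb c' hnot, ha' c' hne]
    · intro h
      refine ⟨Function.update a (.inr c) (b (.inr c)), fun c' hc' => by simp [hc'],
        fun c' hc' => ?_⟩
      by_cases hc : c' = c
      · simp [hc]
      · simp [hc, h c' ⟨hc, hc'⟩]

theorem Exec.exists_trajectory {a b : Assign V I C} {l : List (Stmt0 I C F)}
    (h : Exec T a l b) : ∃ g : ℕ → Assign V I C, g 0 = a ∧ g l.length = b ∧
      ∀ i (hi : i < l.length), l[i].Step T (g i) (g (i + 1)) := by
  induction h with
  | nil a => exact ⟨fun _ => a, rfl, rfl, fun i hi => absurd hi (Nat.not_lt_zero i)⟩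
  | @cons a _ _ _ _ hs _ ih =>
    obtain ⟨g, hg0, hgl, hg⟩ := ih
    refine ⟨fun i => if i = 0 then a else g (i - 1), rfl, by simpa using hgl, ?_⟩
    rintro (_ | i) hi
    · simpa [hg0] using hs
    · simpa using hg i (by simpa using hi)

theorem exec_of_matches {init : Assign V I C} {ζ : ℕ → Assign V I C} {σ : ℕ → Stmt0 I C F}
    (hζ : Matches T init ζ σ) (l : List (Stmt0 I C F)) (k : ℕ)
    (hl : ∀ i (hi : i < l.length), σ (k + i) = l[i]) :
    Exec T (prevA init ζ k) l (prevA init ζ (k + l.length)) := by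
  induction l generalizing k with
  | nil => exact .nil _
  | cons s l ih =>
    refine .cons (a' := ζ k) ?_ ?_
    · have hs : σ k = s := hl 0 (by simp)
      simpa [hs, matchesAt_iff_step] using hζ k
    · have htail : ∀ i (hi : i < l.length), σ (k + 1 + i) = l[i] := fun i hi => by
        rw [Nat.add_right_comm, Nat.add_assoc]
        exact hl (i + 1) (by simpa using hi)
      have hlen : k + 1 + l.length = k + (s :: l).length := by
        rw [List.length_cons]; omega
      exact hlen ▸ ih (k + 1) htail

section Blocks

variable {σ : ℕ → Stmt I C F} {B : ℕ}

theorem succ_div_mod_cases (hB : 0 < B) (j : ℕ) :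
    (j % B + 1 < B ∧ (j + 1) / B = j / B ∧ (j + 1) % B = j % B + 1) ∨
      (j % B + 1 = B ∧ (j + 1) / B = j / B + 1 ∧ (j + 1) % B = 0) := by
  have hj := Nat.mod_add_div j B
  have hr := Nat.mod_lt j hB
  generalize j / B = q at hj
  generalize j % B = r at hj hr
  subst hj
  rcases Nat.lt_or_ge (r + 1) B with h | h
  · exact Or.inl ⟨h, (Nat.div_mod_unique hB).2 ⟨by ring, h⟩⟩
  · obtain rfl : B = r + 1 := by omega
    exact Or.inr ⟨rfl, (Nat.div_mod_unique hB).2 ⟨by ring, hB⟩⟩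

theorem fpos_of_length_eq (hB : 0 < B) (hσ : ∀ t, (σ t).1.length = B) (j : ℕ) :
    fpos σ j = (j / B, j % B) := by
  induction j with
  | zero => simp [fpos]
  | succ j ih =>
    rw [fpos, ih]
    rcases succ_div_mod_cases hB j with ⟨h, hdiv, hmod⟩ | ⟨h, hdiv, hmod⟩ <;>
      simp [hσ, h, hdiv, hmod]

theorem flatten_of_length_eq (hB : 0 < B) (hσ : ∀ t, (σ t).1.length = B) (j : ℕ) :
    flatten σ j = (σ (j / B)).1[j % B]'(by rw [hσ]; exact Nat.mod_lt j hB) := by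
  simp only [flatten, fpos_of_length_eq hB hσ]
  exact List.getD_eq_getElem _ _ _

theorem feasible_iff_exists_exec (hB : 0 < B) (hσ : ∀ t, (σ t).1.length = B)
    (init : Assign V I C) :
    Feasible T init σ ↔ ∃ α : ℕ → Assign V I C, ∀ t, Exec T (prevA init α t) (σ t).1 (α t) := by
  constructor
  · rintro ⟨ζ, hζ⟩
    refine ⟨fun t => prevA init ζ (B * t + B), fun t => ?_⟩
    have hstart : prevA init (fun t => prevA init ζ (B * t + B)) t = prevA init ζ (B * t) := by
      cases t with
      | zero => simp [prevA]
      | succ t => simp [prevA, Nat.mul_succ]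
    have hblock : ∀ i (hi : i < (σ t).1.length), flatten σ (B * t + i) = (σ t).1[i] := by
      intro i hi
      have hi' : i < B := hσ t ▸ hi
      rw [flatten_of_length_eq hB hσ]
      simp only [Nat.mul_add_div hB, Nat.div_eq_of_lt hi', Nat.add_zero, Nat.mul_add_mod,
        Nat.mod_eq_of_lt hi']
    have hexec := exec_of_matches hζ _ _ hblock
    rwa [hσ t, ← hstart] at hexec
  · rintro ⟨α, hα⟩
    choose g hg0 hgB hg using fun t => (hα t).exists_trajectory
    simp only [hσ] at hgB hg
    refine ⟨fun j => g (j / B) (j % B + 1), fun j => ?_⟩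
    have hprev : prevA init (fun j => g (j / B) (j % B + 1)) j = g (j / B) (j % B) := by
      cases j with
      | zero => simpa [prevA] using (hg0 0).symm
      | succ j =>
        rcases succ_div_mod_cases hB j with ⟨_, hdiv, hmod⟩ | ⟨h, hdiv, hmod⟩
        · simp [prevA, hdiv, hmod]
        · simp only [prevA, hdiv, hmod, hg0, h, hgB]
    rw [matchesAt_iff_step, hprev, flatten_of_length_eq hB hσ]
    exact hg _ _ (Nat.mod_lt j hB)

end Blocks

section Combine

variable {a b : Assign V Empty (CStar I C)}

def saveAssign (T : Thy V F) (υ : List (C × FTerm I C F)) (a : Assign V Empty (CStar I C)) :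
    Assign V Empty (CStar I C)
  | .inr (.inr p) => ((υ[p]?).map fun u => u.2.eval T (origOf a)).getD (a (.inr (.inr p)))
  | x => a x

theorem origOf_saveAssign (υ : List (C × FTerm I C F)) :
    origOf (saveAssign T υ a) = origOf a := rfl

theorem saveAssign_nil : saveAssign T [] a = a := by
  funext x
  rcases x with e | c | p
  · exact e.elim
  · rfl
  · simp [saveAssign]

theorem saveAssign_concat (L : List (C × FTerm I C F)) (u : C × FTerm I C F) :
    saveAssign T (L ++ [u]) a =
      Function.update (saveAssign T L a) (.inr (.inr L.length)) (u.2.eval T (origOf a)) := by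
  funext x
  rcases x with e | c | p
  · exact e.elim
  · simp [saveAssign]
  · rcases lt_trichotomy p L.length with h | rfl | h
    · simp [saveAssign, h, h.ne, List.getElem?_append_left]
    · simp [saveAssign]
    · simp [saveAssign, h.ne', List.getElem?_eq_none, Nat.succ_le_of_lt h, h.le]

theorem saveAssign_tmp {υ : List (C × FTerm I C F)} {j : ℕ} (hj : j < υ.length) :
    saveAssign T υ a (.inr (.inr j)) = υ[j].2.eval T (origOf a) := by
  simp [saveAssign, hj]

theorem exec_save_iff (υ : List (C × FTerm I C F)) :
    Exec T a (υ.mapIdx fun j u => .assign (.inr j) u.2.embed) b ↔ b = saveAssign T υ a := by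
  induction υ using List.reverseRecOn generalizing b with
  | nil =>
    rw [List.mapIdx_nil, exec_nil_iff, saveAssign_nil]
  | append_singleton L u ih =>
    rw [List.mapIdx_concat, exec_append_iff]
    simp only [ih, exists_eq_left, exec_singleton_iff, Stmt0.step_assign_iff, FTerm.eval_embed,
      origOf_saveAssign, saveAssign_concat]
    -- the two sides differ only in the `DecidableEq` instance used by `Function.update`
    convert Iff.rfl

end Combine

section Checks

variable (O : Ops V F T) (a : Assign V Empty (CStar I C))

theorem eval_fneg_eq_vtrue_iff (τ : FTerm Empty (CStar I C) F) :
    (FTerm.app O.fneg [τ]).eval T a = T.vtrue ↔ τ.eval T a ≠ T.vtrue := by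
  rw [FTerm.eval_app, List.map_singleton, O.hneg]
  split_ifs with h <;> simp [h, O.tne.symm]

theorem eval_feq_eq_vtrue_iff (τ₁ τ₂ : FTerm Empty (CStar I C) F) :
    (FTerm.app O.feq [τ₁, τ₂]).eval T a = T.vtrue ↔ τ₁.eval T a = τ₂.eval T a := by
  rw [FTerm.eval_app, List.map_cons, List.map_singleton, O.heq]
  split_ifs with h <;> simp [h, O.tne.symm]

theorem eval_conjTerm_eq_vtrue_iff (ts : List (FTerm Empty (CStar I C) F)) :
    (conjTerm T O ts).eval T a = T.vtrue ↔ ∀ τ ∈ ts, τ.eval T a = T.vtrue := by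
  induction ts with
  | nil => simp [conjTerm, FTerm.eval_app, O.htrue]
  | cons τ ts ih =>
    rw [conjTerm, FTerm.eval_app, List.map_cons, List.map_singleton, O.hand, List.forall_mem_cons,
      ← ih]
    split_ifs with h <;> simp [h, O.tne.symm]

theorem eval_checkPreds_eq_vtrue_iff (ρ : List (FTerm I C F)) (l : Set (AP I C F)) :
    (conjTerm T O (ρ.map fun τ => if Sum.inl τ ∈ l then τ.embed else .app O.fneg [τ.embed])).eval
        T a = T.vtrue ↔ ∀ τ ∈ ρ, (τ.eval T (origOf a) = T.vtrue ↔ Sum.inl τ ∈ l) := by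
  rw [eval_conjTerm_eq_vtrue_iff, List.forall_mem_map]
  refine forall₂_congr fun τ _ => ?_
  split_ifs with h <;> simp [h, eval_fneg_eq_vtrue_iff, FTerm.eval_embed]

theorem eval_checkUpdates_eq_vtrue_iff (υ : List (C × FTerm I C F)) (l : Set (AP I C F)) :
    (conjTerm T O (υ.mapIdx fun j u =>
        let eqt : FTerm Empty (CStar I C) F :=
          .app O.feq [.cell (Sum.inl (Sum.inl u.1)), .cell (Sum.inr j)]
        if Sum.inr u ∈ l then eqt else .app O.fneg [eqt])).eval T a = T.vtrue ↔
      ∀ j (hj : j < υ.length),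
        (a (.inr (.inl (.inl υ[j].1))) = a (.inr (.inr j)) ↔ Sum.inr υ[j] ∈ l) := by
  rw [eval_conjTerm_eq_vtrue_iff, List.forall_mem_iff_getElem]
  simp only [List.length_mapIdx, List.getElem_mapIdx]
  refine forall₂_congr fun j hj => ?_
  split_ifs with h
  · rw [eval_feq_eq_vtrue_iff]
    simp [FTerm.eval, h]
  · rw [eval_fneg_eq_vtrue_iff, Ne, eval_feq_eq_vtrue_iff]
    simp [FTerm.eval, h]

end Checks

theorem combine_length (O : Ops V F T) (ρ : List (FTerm I C F)) (υ : List (C × FTerm I C F))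
    (inps : List I) (s : Stmt0 I C F) (l : Set (AP I C F)) :
    (combine T O ρ υ inps [s] l).1.length = υ.length + inps.length + 3 := by
  simp only [combine, List.length_append, List.length_mapIdx, List.length_map, List.length_cons,
    List.length_nil]
  omega

-- The inputs of `b` are unconstrained: `new_inputs` havocs every input.
theorem exec_combine_iff (O : Ops V F T) (ρ : List (FTerm I C F)) (υ : List (C × FTerm I C F))
    {inps : List I} (hinps : ∀ i, i ∈ inps) (s : Stmt0 I C F) (l : Set (AP I C F))
    {a b : Assign V Empty (CStar I C)} :
    Exec T a (combine T O ρ υ inps [s] l).1 b ↔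
      s.Step T (origOf a) (origOf b) ∧
      (∀ p, b (.inr (.inr p)) = saveAssign T υ a (.inr (.inr p))) ∧
      (∀ τ ∈ ρ, (τ.eval T (origOf b) = T.vtrue ↔ Sum.inl τ ∈ l)) ∧
      (∀ u ∈ υ, (b (.inr (.inl (.inl u.1))) = u.2.eval T (origOf a) ↔ Sum.inr u ∈ l)) := by
  have hhavoc : (inps.map fun i => (Stmt0.havoc (.inl (.inr i)) : Stmt0 Empty (CStar I C) F)) =
      (inps.map fun i => .inl (.inr i)).map .havoc := by
    simp
  simp only [combine, List.append_assoc, List.map_singleton, List.singleton_append, hhavoc]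
  simp only [exec_append_iff, exec_save_iff, exists_eq_left, Stmt0.step_embed_iff,
    exec_havoc_iff, exec_cons_iff, Stmt0.step_assert_iff, exec_nil_iff,
    eval_checkPreds_eq_vtrue_iff, eval_checkUpdates_eq_vtrue_iff, origOf_saveAssign]
  have hinp : ∀ c, c ∈ inps.map (fun i => (.inl (.inr i) : CStar I C)) ↔ ∃ i, c = .inl (.inr i) :=
    fun c => by simp [hinps, eq_comm]
  constructor
  · rintro ⟨b, ⟨a₂, ⟨hstep, -, htmp⟩, hhav⟩, _, ⟨hP, rfl⟩, _, ⟨hU, rfl⟩, rfl⟩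
    have hcell : ∀ c, b (.inr (.inl (.inl c))) = a₂ (.inr (.inl (.inl c))) :=
      fun c => hhav _ (by simp [hinp])
    have htmp' : ∀ p, b (.inr (.inr p)) = saveAssign T υ a (.inr (.inr p)) :=
      fun p => (hhav _ (by simp [hinp])).trans (htmp p)
    refine ⟨(s.step_congr_cells fun c => hcell c).2 hstep, htmp', hP, ?_⟩
    rw [List.forall_mem_iff_getElem]
    intro j hj
    rw [← saveAssign_tmp hj, ← htmp']
    exact hU j hj
  · rintro ⟨hstep, htmp, hP, hU⟩
    let a₂ : Assign V Empty (CStar I C) := fun x => match x with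
      | .inr (.inl (.inl c)) => b (.inr (.inl (.inl c)))
      | x => saveAssign T υ a x
    have hstep₂ : s.Step T (origOf a) (origOf a₂) :=
      (s.step_congr_cells (b := origOf b) (b' := origOf a₂) fun _ => rfl).1 hstep
    refine ⟨b, ⟨a₂, ⟨hstep₂, fun _ => rfl, fun _ => rfl⟩, ?_⟩, b, ⟨hP, rfl⟩, b, ⟨?_, rfl⟩, rfl⟩
    · rintro ((c | i) | p) hc
      · rfl
      · exact absurd ((hinp _).2 ⟨i, rfl⟩) hc
      · exact htmp p
    · intro j hj
      rw [htmp, saveAssign_tmp hj]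
      exact hU _ (List.getElem_mem hj)

section Product

variable {Qp Qa : Type} (O : Ops V F T) {P : Buchi (Stmt0 I C F) Qp} {A : Buchi (Set (AP I C F)) Qa}
  (ρ : List (FTerm I C F)) (υ : List (C × FTerm I C F)) (inps : List I)

theorem product_liftB_accepts {σ : ℕ → Stmt0 I C F} {lab : ℕ → Set (AP I C F)}
    (hσ : P.Accepts σ) (hlab : A.Accepts lab) :
    (product T O (liftB P) A ρ υ inps).Accepts fun t => combine T O ρ υ inps [σ t] (lab t) := by
  obtain ⟨rP, ⟨hP0, hPδ⟩, -⟩ := hσ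
  obtain ⟨rA, ⟨hA0, hAδ⟩, hacc⟩ := hlab
  exact ⟨fun t => (rP t, rA t), ⟨by simp [product, liftB, hP0, hA0],
    fun t => ⟨_, lab t, ⟨σ t, hPδ t, rfl⟩, hAδ t, rfl⟩⟩, hacc⟩

theorem exists_of_product_liftB_accepts (hP : P.Acc = Set.univ)
    {w : ℕ → Stmt Empty (CStar I C) F} (hw : (product T O (liftB P) A ρ υ inps).Accepts w) :
    ∃ σ lab, P.Accepts σ ∧ A.Accepts lab ∧ w = fun t => combine T O ρ υ inps [σ t] (lab t) := by
  obtain ⟨r, ⟨hr0, hr⟩, hacc⟩ := hw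
  have hstep : ∀ t, ∃ s l, P.δ (r t).1 s (r (t + 1)).1 ∧ A.δ (r t).2 l (r (t + 1)).2 ∧
      w t = combine T O ρ υ inps [s] l := fun t => by
    obtain ⟨_, l, ⟨s, hs, rfl⟩, hl, hw⟩ := hr t
    exact ⟨s, l, hs, hl, hw⟩
  choose σ lab hσ hlab hw using hstep
  exact ⟨σ, lab,
    ⟨fun t => (r t).1, ⟨congrArg Prod.fst hr0, hσ⟩, fun n => ⟨n, le_rfl, hP ▸ trivial⟩⟩,
    ⟨fun t => (r t).2, ⟨congrArg Prod.snd hr0, hlab⟩, hacc⟩, funext hw⟩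

end Product

theorem TSL.toLTL_sat_iff {init : Assign V I C} {ζ : ℕ → Assign V I C} {w : ℕ → Set (AP I C F)}
    (ψ : TSL I C F)
    (hpred : ∀ τ ∈ ψ.predList, ∀ t, Sum.inl τ ∈ w t ↔ (TSL.pred τ).sat T init ζ t)
    (hupd : ∀ u ∈ ψ.updList, ∀ t, Sum.inr u ∈ w t ↔ (TSL.upd u.1 u.2).sat T init ζ t) (t : ℕ) :
    ψ.toLTL.sat w t ↔ ψ.sat T init ζ t := by
  induction ψ generalizing t with
  | pred τ => exact hpred τ (by simp [TSL.predList]) t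
  | upd c τ => exact hupd (c, τ) (by simp [TSL.updList]) t
  | not ψ ih => exact not_congr (ih hpred hupd t)
  | and ψ₁ ψ₂ ih₁ ih₂ =>
    simp only [TSL.predList, TSL.updList, List.forall_mem_append] at hpred hupd
    exact and_congr (ih₁ hpred.1 hupd.1 t) (ih₂ hpred.2 hupd.2 t)
  | next ψ ih => exact ih hpred hupd (t + 1)
  | untl ψ₁ ψ₂ ih₁ ih₂ =>
    simp only [TSL.predList, TSL.updList, List.forall_mem_append] at hpred hupd
    simp only [TSL.toLTL, LTL.sat, TSL.sat, ih₁ hpred.1 hupd.1, ih₂ hpred.2 hupd.2]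

theorem origOf_prevA {init : Assign V I C} {initC : Assign V Empty (CStar I C)}
    (hinit : origOf initC = init) (α : ℕ → Assign V Empty (CStar I C)) (t : ℕ) :
    origOf (prevA initC α t) = prevA init (fun t => origOf (α t)) t := by
  cases t <;> simp [prevA, hinit]

section Correctness

variable {Qp Qa : Type} (O : Ops V F T) {init : Assign V I C} {initC : Assign V Empty (CStar I C)}
  {inps : List I} {P : Buchi (Stmt0 I C F) Qp} {φ : TSL I C F} {A : Buchi (Set (AP I C F)) Qa}

theorem exists_violation_of_product_feasible (hinit : origOf initC = init)
    (hinps : ∀ i, i ∈ inps) (hP : P.Acc = Set.univ)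
    (hA : ∀ w, A.Accepts w ↔ (LTL.not φ.toLTL).sat w 0) {w : ℕ → Stmt Empty (CStar I C) F}
    (hw : (product T O (liftB P) A φ.predList φ.updList inps).Accepts w)
    (hfeas : Feasible T initC w) :
    ∃ σ, P.Accepts σ ∧ ∃ ζ, Matches T init ζ σ ∧ ¬ φ.sat T init ζ 0 := by
  obtain ⟨σ, lab, hσ, hlab, rfl⟩ := exists_of_product_liftB_accepts O _ _ _ hP hw
  obtain ⟨α, hα⟩ := (feasible_iff_exists_exec (Nat.succ_pos _)
    (fun t => combine_length O _ _ _ (σ t) (lab t)) initC).1 hfeas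
  simp only [exec_combine_iff O _ _ hinps, origOf_prevA hinit] at hα
  refine ⟨σ, hσ, fun t => origOf (α t), fun t => (matchesAt_iff_step ..).2 (hα t).1,
    fun hφ => (hA lab).1 hlab ?_⟩
  exact (TSL.toLTL_sat_iff φ (fun τ hτ t => ((hα t).2.2.1 τ hτ).symm)
    (fun u hu t => ((hα t).2.2.2 u hu).symm.trans eq_comm) 0).2 hφ

theorem product_feasible_of_violation (hinit : origOf initC = init) (hinps : ∀ i, i ∈ inps)
    (hA : ∀ w, A.Accepts w ↔ (LTL.not φ.toLTL).sat w 0) {σ : ℕ → Stmt0 I C F}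
    (hσ : P.Accepts σ) {ζ : ℕ → Assign V I C} (hζ : Matches T init ζ σ)
    (hφ : ¬ φ.sat T init ζ 0) :
    ∃ w, (product T O (liftB P) A φ.predList φ.updList inps).Accepts w ∧ Feasible T initC w := by
  let lab := SeqW T init ζ Set.univ Set.univ
  have hlab : A.Accepts lab := (hA lab).2 fun h =>
    hφ ((TSL.toLTL_sat_iff φ (fun τ _ t => by simp [lab, SeqW]) (fun u _ t => by simp [lab, SeqW])
      0).1 h)
  let α : ℕ → Assign V Empty (CStar I C) := fun t x => match x with
    | .inr (.inl (.inl c)) => ζ t (.inr c)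
    | .inr (.inl (.inr i)) => ζ t (.inl i)
    | .inr (.inr p) =>
      ((φ.updList[p]?).map fun u => u.2.eval T (prevA init ζ t)).getD (initC (.inr (.inr p)))
  have horig : ∀ t, origOf (α t) = ζ t := fun t => funext fun x => by cases x <;> rfl
  have hprev : ∀ t, origOf (prevA initC α t) = prevA init ζ t := fun t => by
    simp only [origOf_prevA hinit, horig]
  refine ⟨_, product_liftB_accepts O _ _ _ hσ hlab, (feasible_iff_exists_exec (Nat.succ_pos _)
    (fun t => combine_length O _ _ _ (σ t) (lab t)) initC).2 ⟨α, fun t => ?_⟩⟩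
  rw [exec_combine_iff O _ _ hinps, hprev, horig]
  refine ⟨(matchesAt_iff_step ..).1 (hζ t), fun p => ?_, fun τ _ => by simp [lab, SeqW, TSL.sat],
    fun u _ => by simp [lab, SeqW, TSL.sat]; exact eq_comm⟩
  rcases h : φ.updList[p]? with _ | u
  · cases t <;> simp [saveAssign, α, prevA, h]
  · simp [saveAssign, α, hprev, h]

end Correctness

theorem tsl_model_checking_general
    {V I C F Qp Qa : Type} (T : Thy V F) (O : Ops V F T)
    (init : Assign V I C) (initC : Assign V Empty (CStar I C))
    (hic : ∀ c : C, initC (.inr (.inl (.inl c))) = init (.inr c))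
    (hii : ∀ i : I, initC (.inr (.inl (.inr i))) = init (.inl i))
    (inps : List I) (hinps : ∀ i : I, i ∈ inps)
    (P : Buchi (Stmt0 I C F) Qp) (hPAcc : P.Acc = Set.univ)
    (φ : TSL I C F)
    (A : Buchi (Set (AP I C F)) Qa)
    (hA : ∀ w : ℕ → Set (AP I C F), A.Accepts w ↔ (LTL.not φ.toLTL).sat w 0) :
    SatisfiesTSL T init P φ ↔
      ¬ ∃ w, (product T O (liftB P) A φ.predList φ.updList inps).Accepts w ∧
        Feasible T initC w := by
  have hinit : origOf initC = init := funext fun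
    | .inl i => hii i
    | .inr c => hic c
  constructor
  · rintro hsat ⟨w, hw, hfeas⟩
    obtain ⟨σ, hσ, ζ, hζ, hviol⟩ :=
      exists_violation_of_product_feasible O hinit hinps hPAcc hA hw hfeas
    exact hviol (hsat σ hσ ζ hζ)
  · intro hno σ hσ ζ hζ
    by_contra hviol
    exact hno (product_feasible_of_violation O hinit hinps hA hσ hζ hviol)

theorem tsl_model_checking
    {V I C F Qp Qa : Type} (T : Thy V F) (O : Ops V F T)
    (init : Assign V I C) (initC : Assign V Empty (CStar I C))
    (hic : ∀ c : C, initC (.inr (.inl (.inl c))) = init (.inr c))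
    (hii : ∀ i : I, initC (.inr (.inl (.inr i))) = init (.inl i))
    (inps : List I) (hinps : ∀ i : I, i ∈ inps) (hnd : inps.Nodup)
    (P : Buchi (Stmt0 I C F) Qp) (hPAcc : P.Acc = Set.univ)
    (φ : TSL I C F) (hφ : ∀ τ ∈ φ.predList, IsPredTerm T τ)
    (A : Buchi (Set (AP I C F)) Qa)
    (hA : ∀ w : ℕ → Set (AP I C F), A.Accepts w ↔ (LTL.not φ.toLTL).sat w 0) :
    SatisfiesTSL T init P φ ↔
      ¬ ∃ w, (product T O (liftB P) A φ.predList φ.updList inps).Accepts w ∧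
        Feasible T initC w :=
  tsl_model_checking_general T O init initC hic hii inps hinps P hPAcc φ A hA

end TSLMC
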